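/- Let T be a left-continuous t-norm, I its residual implicator, μ a monotone measure on a finite nonempty set X, and R a T-equivalence relation on X. For every fuzzy set A on X, the Sugeno lower approximation L(y) = ⨍ I(R(x,y), A(x)) dμ(x) is a fixed point of the classical lower approximation: min_{x∈X} I(R(x,y), L(x)) = L(y) for every y ∈ X. -/

import Mathlib

structure IsTNorm (T : ℝ → ℝ → ℝ) : Prop where
  maps_to : ∀ x ∈ Set.Icc (0:ℝ) 1, ∀ y ∈ Set.Icc (0:ℝ) 1, T x y ∈ Set.Icc (0:ℝ) 1
  comm : ∀ x ∈ Set.Icc (0:ℝ) 1, ∀ y ∈ Set.Icc (0:ℝ) 1, T x y = T y x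
  assoc : ∀ x ∈ Set.Icc (0:ℝ) 1, ∀ y ∈ Set.Icc (0:ℝ) 1, ∀ z ∈ Set.Icc (0:ℝ) 1,
      T (T x y) z = T x (T y z)
  mono : ∀ x₁ ∈ Set.Icc (0:ℝ) 1, ∀ x₂ ∈ Set.Icc (0:ℝ) 1, ∀ y₁ ∈ Set.Icc (0:ℝ) 1,
      ∀ y₂ ∈ Set.Icc (0:ℝ) 1, x₁ ≤ x₂ → y₁ ≤ y₂ → T x₁ y₁ ≤ T x₂ y₂
  one_left : ∀ x ∈ Set.Icc (0:ℝ) 1, T 1 x = x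

/-- `T` is left-continuous: it commutes with suprema of nonempty subsets of `[0,1]`
in each (equivalently, by commutativity, the second) argument. -/
def LeftContinuousTNorm (T : ℝ → ℝ → ℝ) : Prop :=
  ∀ x ∈ Set.Icc (0:ℝ) 1, ∀ S : Set ℝ, S.Nonempty → S ⊆ Set.Icc (0:ℝ) 1 →
    T x (sSup S) = sSup (T x '' S)

/-- The residual implicator of `T`: `I(x,y) = sup {λ ∈ [0,1] | T(x,λ) ≤ y}`. -/
noncomputable def resid (T : ℝ → ℝ → ℝ) (x y : ℝ) : ℝ :=
  sSup {l | l ∈ Set.Icc (0:ℝ) 1 ∧ T x l ≤ y}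

/-- `R` is a `T`-equivalence relation: a `[0,1]`-valued reflexive, symmetric and
`T`-transitive fuzzy relation. -/
structure IsTEquiv {X : Type*} (T : ℝ → ℝ → ℝ) (R : X → X → ℝ) : Prop where
  mem : ∀ x y, R x y ∈ Set.Icc (0:ℝ) 1
  refl : ∀ x, R x x = 1
  symm : ∀ x y, R x y = R y x
  trans : ∀ x y z, T (R x y) (R y z) ≤ R x z

/-- A monotone measure on a finite set `X`. -/
structure IsMonotoneMeasure {X : Type*} (μ : Set X → ℝ) : Prop where
  empty : μ ∅ = 0
  univ : μ Set.univ = 1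
  mono : ∀ E F : Set X, E ⊆ F → μ E ≤ μ F

/-- The Sugeno integral of `f : X → ℝ` w.r.t. `μ` on the finite nonempty set `X`:
`max_i min(μ(A*_i), f(x*_i))` where `x*` enumerates `X` with
`f(x*_1) ≤ … ≤ f(x*_n)` and `A*_i = {x*_i, …, x*_n}`. -/
noncomputable def sugeno {X : Type*} [Fintype X] [Nonempty X] (μ : Set X → ℝ) (f : X → ℝ) : ℝ :=
  let e : Fin (Fintype.card X) ≃ X := (Fintype.equivFin X).symm
  let σ : Equiv.Perm (Fin (Fintype.card X)) := Tuple.sort (f ∘ e)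
  haveI : Nonempty (Fin (Fintype.card X)) := Fin.pos_iff_nonempty.mp Fintype.card_pos
  Finset.univ.sup' Finset.univ_nonempty
    (fun i => min (μ {x | ∃ j, i ≤ j ∧ e (σ j) = x}) (f (e (σ i))))


/-
The Sugeno lower approximation `L` is `T`-extensional, `T (R x y) (L y) ≤ L x`: multiplying by `R x y` can be pushed
inside the Sugeno integral (which is built from `min` and `μ` alone, both untouched by `T (R x y)`),
and then `T`-transitivity of `R` together with residuation (`T a (I a b) ≤ b`, which is where
left-continuity enters) bounds the integrand pointwise by the integrand of `L x`. Every extensional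
fuzzy set is a fixed point of the lower approximation: `≥` is residuation applied to extensionality,
and `≤` is the term `x = y`, where `I 1 b = b`.
-/

namespace IsTNorm

variable {T : ℝ → ℝ → ℝ}

lemma le_right (hT : IsTNorm T) {x y : ℝ} (hx : x ∈ Set.Icc (0:ℝ) 1)
    (hy : y ∈ Set.Icc (0:ℝ) 1) : T x y ≤ y := by
  have h := hT.mono x hx 1 unitInterval.one_mem y hy y hy hx.2 le_rfl
  rwa [hT.one_left y hy] at h

end IsTNorm

section Residuum

variable {T : ℝ → ℝ → ℝ}

lemma zero_mem_resid_set (hT : IsTNorm T) {x y : ℝ} (hx : x ∈ Set.Icc (0:ℝ) 1)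
    (hy : y ∈ Set.Icc (0:ℝ) 1) : (0:ℝ) ∈ {l | l ∈ Set.Icc (0:ℝ) 1 ∧ T x l ≤ y} :=
  ⟨unitInterval.zero_mem, (hT.le_right hx unitInterval.zero_mem).trans hy.1⟩

lemma bddAbove_resid_set {x y : ℝ} : BddAbove {l | l ∈ Set.Icc (0:ℝ) 1 ∧ T x l ≤ y} :=
  ⟨1, fun _ hl => hl.1.2⟩

lemma resid_mem (hT : IsTNorm T) {x y : ℝ} (hx : x ∈ Set.Icc (0:ℝ) 1)
    (hy : y ∈ Set.Icc (0:ℝ) 1) : resid T x y ∈ Set.Icc (0:ℝ) 1 :=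
  ⟨le_csSup bddAbove_resid_set (zero_mem_resid_set hT hx hy),
    csSup_le ⟨0, zero_mem_resid_set hT hx hy⟩ fun _ hl => hl.1.2⟩

lemma le_resid {x y c : ℝ} (hc : c ∈ Set.Icc (0:ℝ) 1) (h : T x c ≤ y) : c ≤ resid T x y :=
  le_csSup bddAbove_resid_set ⟨hc, h⟩

lemma tnorm_resid_le (hT : IsTNorm T) (hTlc : LeftContinuousTNorm T) {x y : ℝ}
    (hx : x ∈ Set.Icc (0:ℝ) 1) (hy : y ∈ Set.Icc (0:ℝ) 1) : T x (resid T x y) ≤ y := by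
  rw [resid, hTlc x hx _ ⟨0, zero_mem_resid_set hT hx hy⟩ fun _ hl => hl.1]
  refine csSup_le (Set.Nonempty.image _ ⟨0, zero_mem_resid_set hT hx hy⟩) ?_
  rintro _ ⟨l, hl, rfl⟩
  exact hl.2

lemma resid_one_left (hT : IsTNorm T) {y : ℝ} (hy : y ∈ Set.Icc (0:ℝ) 1) : resid T 1 y = y := by
  have hset : {l | l ∈ Set.Icc (0:ℝ) 1 ∧ T 1 l ≤ y} = Set.Icc 0 y := by
    ext l
    constructor
    · rintro ⟨hl, hTl⟩
      exact ⟨hl.1, hT.one_left l hl ▸ hTl⟩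
    · rintro ⟨h0, hl⟩
      have hl1 : l ∈ Set.Icc (0:ℝ) 1 := ⟨h0, hl.trans hy.2⟩
      exact ⟨hl1, (hT.one_left l hl1).le.trans hl⟩
  rw [resid, hset, csSup_Icc hy.1]

end Residuum

lemma IsTEquiv.tnorm_resid_le_resid {X : Type*} {T : ℝ → ℝ → ℝ} {R : X → X → ℝ}
    (hT : IsTNorm T) (hTlc : LeftContinuousTNorm T) (hR : IsTEquiv T R) {a : ℝ} (ha : a ∈ Set.Icc (0:ℝ) 1) (x y z : X) :
    T (R x y) (resid T (R z y) a) ≤ resid T (R z x) a := by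
  have hres := resid_mem hT (hR.mem z y) ha
  refine le_resid (hT.maps_to _ (hR.mem x y) _ hres) ?_
  calc T (R z x) (T (R x y) (resid T (R z y) a))
      = T (T (R z x) (R x y)) (resid T (R z y) a) :=
        (hT.assoc _ (hR.mem z x) _ (hR.mem x y) _ hres).symm
    _ ≤ T (R z y) (resid T (R z y) a) :=
        hT.mono _ (hT.maps_to _ (hR.mem z x) _ (hR.mem x y)) _ (hR.mem z y) _ hres _ hres
          (hR.trans z x y) le_rfl
    _ ≤ a := tnorm_resid_le hT hTlc (hR.mem z y) ha

namespace IsMonotoneMeasure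

variable {X : Type*} {μ : Set X → ℝ}

lemma nonneg (hμ : IsMonotoneMeasure μ) (E : Set X) : 0 ≤ μ E :=
  hμ.empty ▸ hμ.mono ∅ E (Set.empty_subset E)

lemma monotone (hμ : IsMonotoneMeasure μ) : Monotone μ :=
  fun E F h => hμ.mono E F h

end IsMonotoneMeasure

section Sugeno

variable {X : Type*} [Fintype X] [Nonempty X] {μ : Set X → ℝ}

lemma exists_sugeno_eq_min (μ : Set X → ℝ) (f : X → ℝ) :
    ∃ E : Set X, ∃ x₀ ∈ E, sugeno μ f = min (μ E) (f x₀) ∧ ∀ x ∈ E, f x₀ ≤ f x := by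
  set e : Fin (Fintype.card X) ≃ X := (Fintype.equivFin X).symm
  set σ : Equiv.Perm (Fin (Fintype.card X)) := Tuple.sort (f ∘ e)
  have : Nonempty (Fin (Fintype.card X)) := Fin.pos_iff_nonempty.mp Fintype.card_pos
  obtain ⟨i, -, hi⟩ := Finset.exists_mem_eq_sup' Finset.univ_nonempty
    fun i => min (μ {x | ∃ j, i ≤ j ∧ e (σ j) = x}) (f (e (σ i)))
  refine ⟨{x | ∃ j, i ≤ j ∧ e (σ j) = x}, e (σ i), ⟨i, le_rfl, rfl⟩, hi, ?_⟩
  rintro _ ⟨j, hij, rfl⟩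
  exact Tuple.monotone_sort (f ∘ e) hij

lemma min_le_sugeno (hμ : Monotone μ) (f : X → ℝ) {E : Set X} (hE : E.Nonempty) {t : ℝ}
    (ht : ∀ x ∈ E, t ≤ f x) : min (μ E) t ≤ sugeno μ f := by
  classical
  set e : Fin (Fintype.card X) ≃ X := (Fintype.equivFin X).symm
  set σ : Equiv.Perm (Fin (Fintype.card X)) := Tuple.sort (f ∘ e)
  have : Nonempty (Fin (Fintype.card X)) := Fin.pos_iff_nonempty.mp Fintype.card_pos
  set S := Finset.univ.filter fun j => e (σ j) ∈ E
  obtain ⟨x₀, hx₀⟩ := hE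
  have hS : S.Nonempty := ⟨σ.symm (e.symm x₀), by simpa [S] using hx₀⟩
  -- the first position of `E` in the sorted enumeration: its tail set contains `E`
  set i := S.min' hS
  have hiE : e (σ i) ∈ E := (Finset.mem_filter.mp (S.min'_mem hS)).2
  have hEi : E ⊆ {x | ∃ j, i ≤ j ∧ e (σ j) = x} := fun x hx =>
    ⟨σ.symm (e.symm x), S.min'_le _ (by simpa [S] using hx), by simp⟩
  exact (min_le_min (hμ hEi) (ht _ hiE)).trans
    (Finset.le_sup' (fun i => min (μ {x | ∃ j, i ≤ j ∧ e (σ j) = x}) (f (e (σ i))))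
      (Finset.mem_univ i))

lemma sugeno_mono (hμ : Monotone μ) {f g : X → ℝ} (hfg : f ≤ g) : sugeno μ f ≤ sugeno μ g := by
  obtain ⟨E, x₀, hx₀, hf, hmin⟩ := exists_sugeno_eq_min μ f
  exact hf ▸ min_le_sugeno hμ g ⟨x₀, hx₀⟩ fun x hx => (hmin x hx).trans (hfg x)

lemma sugeno_mem (hμ : IsMonotoneMeasure μ) {f : X → ℝ} (hf : ∀ x, f x ∈ Set.Icc (0:ℝ) 1) :
    sugeno μ f ∈ Set.Icc (0:ℝ) 1 := by
  obtain ⟨E, x₀, -, hEq, -⟩ := exists_sugeno_eq_min μ f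
  exact hEq ▸ ⟨le_min (hμ.nonneg E) (hf x₀).1, (min_le_right _ _).trans (hf x₀).2⟩

lemma tnorm_sugeno_le {T : ℝ → ℝ → ℝ} (hT : IsTNorm T) (hμ : IsMonotoneMeasure μ) {a : ℝ}
    (ha : a ∈ Set.Icc (0:ℝ) 1) {f : X → ℝ} (hf : ∀ x, f x ∈ Set.Icc (0:ℝ) 1) :
    T a (sugeno μ f) ≤ sugeno μ fun x => T a (f x) := by
  obtain ⟨E, x₀, hx₀, hEq, hmin⟩ := exists_sugeno_eq_min μ f
  have hm : min (μ E) (f x₀) ∈ Set.Icc (0:ℝ) 1 :=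
    ⟨le_min (hμ.nonneg E) (hf x₀).1, (min_le_right _ _).trans (hf x₀).2⟩
  calc T a (sugeno μ f) ≤ min (μ E) (T a (f x₀)) := by
        rw [hEq]
        exact le_min ((hT.le_right ha hm).trans (min_le_left _ _))
          (hT.mono a ha a ha _ hm _ (hf x₀) le_rfl (min_le_right _ _))
    _ ≤ sugeno μ fun x => T a (f x) :=
        min_le_sugeno hμ.monotone _ ⟨x₀, hx₀⟩ fun x hx =>
          hT.mono a ha a ha _ (hf x₀) _ (hf x) le_rfl (hmin x hx)

end Sugeno

section LowerApproximation

variable {X : Type*} [Fintype X] [Nonempty X] {T : ℝ → ℝ → ℝ} {R : X → X → ℝ}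

noncomputable def lowerApprox (T : ℝ → ℝ → ℝ) (R : X → X → ℝ) (B : X → ℝ) (y : X) : ℝ :=
  Finset.univ.inf' Finset.univ_nonempty fun x => resid T (R x y) (B x)

noncomputable def sugenoLowerApprox (T : ℝ → ℝ → ℝ) (μ : Set X → ℝ) (R : X → X → ℝ)
    (A : X → ℝ) (y : X) : ℝ :=
  sugeno μ fun x => resid T (R x y) (A x)

lemma lowerApprox_eq_of_extensional (hT : IsTNorm T) (hrefl : ∀ x, R x x = 1) {B : X → ℝ}
    (hB : ∀ x, B x ∈ Set.Icc (0:ℝ) 1) (hext : ∀ x y, T (R x y) (B y) ≤ B x) :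
    lowerApprox T R B = B := by
  funext y
  refine le_antisymm ?_ (Finset.le_inf' _ _ fun x _ => le_resid (hB y) (hext x y))
  calc lowerApprox T R B y ≤ resid T (R y y) (B y) := Finset.inf'_le _ (Finset.mem_univ y)
    _ = B y := by rw [hrefl, resid_one_left hT (hB y)]

lemma sugenoLowerApprox_extensional {μ : Set X → ℝ} (hT : IsTNorm T)
    (hTlc : LeftContinuousTNorm T) (hμ : IsMonotoneMeasure μ) (hR : IsTEquiv T R) {A : X → ℝ}
    (hA : ∀ x, A x ∈ Set.Icc (0:ℝ) 1) (x y : X) :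
    T (R x y) (sugenoLowerApprox T μ R A y) ≤ sugenoLowerApprox T μ R A x :=
  (tnorm_sugeno_le hT hμ (hR.mem x y) fun z => resid_mem hT (hR.mem z y) (hA z)).trans
    (sugeno_mono hμ.monotone fun z => hR.tnorm_resid_le_resid hT hTlc (hA z) x y z)

end LowerApproximation

/-- the Sugeno lower approximation is a fixed point of the classical
lower approximation. -/
theorem stmt10 {X : Type*} [Fintype X] [Nonempty X]
    (T : ℝ → ℝ → ℝ) (hT : IsTNorm T) (hTlc : LeftContinuousTNorm T)
    (μ : Set X → ℝ) (hμ : IsMonotoneMeasure μ)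
    (R : X → X → ℝ) (hR : IsTEquiv T R)
    (A : X → ℝ) (hA : ∀ x, A x ∈ Set.Icc (0:ℝ) 1) :
    ∀ y : X,
      Finset.univ.inf' Finset.univ_nonempty
          (fun x => resid T (R x y) (sugeno μ (fun x' => resid T (R x' x) (A x'))))
        = sugeno μ (fun x' => resid T (R x' y) (A x')) :=
  congrFun <| lowerApprox_eq_of_extensional hT hR.refl
    (fun y => sugeno_mem hμ fun x => resid_mem hT (hR.mem x y) (hA x))
    (sugenoLowerApprox_extensional hT hTlc hμ hR hA)
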